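/- arXiv:2509.04789 — 2 statements merged into one kernel-verified Lean document; each statement's English description precedes it below -/
import Mathlib

section
/- Bijection between path systems: with Γ as above and fixed i, the map sending a family of paths P = (P_1,…,P_n), vertex-disjoint in Γ \ {X} with P_j : A_j → B_{σ(j)}, to the family P̄ obtained by appending the edge B_i → X to the path ending at B_i, is a bijection between vertex-disjoint path systems in Γ \ {X} from {A_1,…,A_n} to {B_1,…,B_n} and vertex-disjoint path systems in Γ from {A_1,…,A_n} to {B_1,…,B_{i-1},X,B_{i+1},…,B_n}; moreover this bijection preserves the sign and multiplies the weight by x_i. -/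
/-- A vertex-disjoint path system in the digraph `Γ` (vertices `A_1,…,A_n`,
`B_1,…,B_n`, `X`; edges `A_j → B_k` and `B_k → X`) from the sources
`A_1, …, A_n` to the terminal vertices `B_1, …, B_{i-1}, X, B_{i+1}, …, B_n`.
It consists of a permutation `σ` (path `P_j` ends at the `σ j`-th terminal
vertex), the index `mid` of the intermediate vertex `B_mid` of the unique path
ending at `X` (namely the path `P_j` with `σ j = i`, which is
`A_j → B_mid → X`; all other paths are single edges `A_j → B_(σ j)`), together
with the vertex-disjointness condition: the intermediate vertex `B_mid` is
distinct from every terminal vertex `B_m`, `m ≠ i`, used by the other paths. -/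
structure GammaVDSystem (n : ℕ) (i : Fin n) where
  σ : Equiv.Perm (Fin n)
  mid : Fin n
  disj : ∀ m : Fin n, m ≠ i → mid ≠ m

open Finset in
/-- The weight of a vertex-disjoint path system: the path ending at `X` is
`A_j → B_mid → X` of weight `a j mid * x mid`, and the path ending at
`B_(σ j)`, `σ j ≠ i`, is the single edge of weight `a j (σ j)`. -/
def GammaVDSystem.weight {n : ℕ} {R : Type*} [CommRing R] {i : Fin n}
    (a : Fin n → Fin n → R) (x : Fin n → R) (p : GammaVDSystem n i) : R :=
  ∏ j, if p.σ j = i then a j p.mid * x p.mid else a j (p.σ j)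

open Finset in
/-- Bijection between path systems: appending the edge `B_i → X` to the path
ending at `B_i` is a bijection from vertex-disjoint path systems in `Γ \ {X}`
from `{A_1,…,A_n}` to `{B_1,…,B_n}` (which are exactly the permutations `σ`,
each path being a single edge) onto vertex-disjoint path systems in `Γ` from
`{A_1,…,A_n}` to `{B_1,…,B_{i-1},X,B_{i+1},…,B_n}`; it preserves the underlying
permutation (hence the sign) and multiplies the weight by `x i`. -/
theorem gamma_path_system_bijection {n : ℕ} {R : Type*} [CommRing R]
    (a : Fin n → Fin n → R) (x : Fin n → R) (i : Fin n) :
    ∃ e : Equiv.Perm (Fin n) ≃ GammaVDSystem n i,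
      (∀ σ, (e σ).σ = σ) ∧
      (∀ σ, Equiv.Perm.sign ((e σ).σ) = Equiv.Perm.sign σ) ∧
      (∀ σ, (e σ).weight a x = x i * ∏ j, a j (σ j)) := by

  have hmid : ∀ p : GammaVDSystem n i, p.mid = i := by
    intro p
    by_contra h
    exact p.disj p.mid h rfl
  refine ⟨{ toFun := fun σ => ⟨σ, i, fun m hm hc => hm hc.symm⟩
            invFun := fun p => p.σ
            left_inv := fun σ => rfl
            right_inv := fun p => by
              cases p with
              | mk σ mid disj =>
                have : mid = i := hmid ⟨σ, mid, disj⟩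
                subst this
                rfl }, fun σ => rfl, fun σ => rfl, fun σ => ?_⟩
  simp only [GammaVDSystem.weight]
  have h1 : ∀ j : Fin n, (if σ j = i then a j i * x i else a j (σ j))
      = a j (σ j) * (if σ j = i then x i else 1) := by
    intro j
    by_cases h : σ j = i <;> simp [h, mul_comm]
  calc (∏ j, if σ j = i then a j i * x i else a j (σ j))
      = ∏ j, a j (σ j) * (if σ j = i then x i else 1) := Finset.prod_congr rfl (fun j _ => h1 j)
    _ = x i * ∏ j, a j (σ j) := ?_
  rw [Finset.prod_mul_distrib]
  have h2 : (∏ j, if σ j = i then x i else 1) = x i := by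
    have h3 : ∀ j : Fin n, (σ j = i) ↔ (j = σ⁻¹ i) := fun j =>
      Equiv.apply_eq_iff_eq_symm_apply σ
    simp only [h3]
    simp [Finset.prod_ite_eq']
  rw [h2, mul_comm]
end

section
/- In any finite acyclic weighted digraph with chosen initial vertices A_1,…,A_n and final vertices B_1,…,B_n, the determinant of the path matrix M (M_{jk} = sum of weights of directed paths from A_j to B_k) equals the sum over vertex-disjoint path systems P of sgn(P)·w(P) (Gessel–Viennot–Lindström). -/
/-- A directed path from `s` to `t` in the digraph on the finite vertex set `V`
with edge relation `E`: a finite sequence of vertices starting at `s`, ending at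
`t`, each consecutive pair joined by an edge.  In an acyclic digraph every
directed path visits pairwise distinct vertices, so its length is at most
`Fintype.card V`, which is the bound imposed here. -/
def DiPath (V : Type*) [Fintype V] (E : V → V → Prop) (s t : V) :=
  {p : Σ l : Fin (Fintype.card V + 1), Fin (l.1 + 1) → V //
    p.2 0 = s ∧ p.2 (Fin.last p.1.1) = t ∧
      ∀ k : Fin p.1.1, E (p.2 k.castSucc) (p.2 k.succ)}

instance (V : Type*) [Fintype V] [DecidableEq V] (E : V → V → Prop)
    [DecidableRel E] (s t : V) : Fintype (DiPath V E s t) :=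
  Subtype.fintype _

open Finset in
/-- The weight of a directed path: the product of the weights of its edges. -/
def DiPath.weight {V : Type*} [Fintype V] {E : V → V → Prop} {s t : V}
    {R : Type*} [CommRing R] (w : V → V → R) (p : DiPath V E s t) : R :=
  ∏ k : Fin p.1.1.1, w (p.1.2 k.castSucc) (p.1.2 k.succ)

/-- A vertex-disjoint path system from the initial vertices `A 0, …, A (n-1)` to
the final vertices `B 0, …, B (n-1)`: a permutation `σ` together with directed
paths `P j : A j → B (σ j)`, no two of which share a vertex. -/
def VDPathSystem (V : Type*) [Fintype V] (E : V → V → Prop) {n : ℕ}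
    (A B : Fin n → V) :=
  {q : Σ σ : Equiv.Perm (Fin n), ∀ j, DiPath V E (A j) (B (σ j)) //
    ∀ j j' : Fin n, j ≠ j' → ∀ u v, (q.2 j).1.2 u ≠ (q.2 j').1.2 v}

instance (V : Type*) [Fintype V] [DecidableEq V] (E : V → V → Prop)
    [DecidableRel E] {n : ℕ} (A B : Fin n → V) :
    Fintype (VDPathSystem V E A B) :=
  Subtype.fintype _

/-!
Expanding `det M = ∑ σ, sgn σ ∏ j, M j (σ j)` and multiplying out the sums of path weights
writes the determinant as the signed weight `sgn σ · ∏ j, w(P j)` summed over all path systems,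
disjoint or not. The non-disjoint systems cancel in pairs: let `j₀` be the least index whose
path meets another path, `v` the first vertex of `P j₀` lying on another path, and `j₁` the
least index `≠ j₀` whose path passes through `v`. Exchanging the tails of `P j₀` and `P j₁`
after `v` keeps the multiset of edges, hence the weight, and composes `σ` with a transposition,
hence flips the sign. In an acyclic graph the new sequences are again paths, with the same `j₀`,
`v` and `j₁`, so the exchange is an involution without fixed points.
-/

lemma exists_ne_congr_off_pair {ι : Type*} {P Q : ι → Prop} {a b j : ι}
    (hPQ : ∀ i, i ≠ a → i ≠ b → (P i ↔ Q i)) (hab : P a ∨ P b ↔ Q a ∨ Q b) (ha : j ≠ a)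
    (hb : j ≠ b) : (∃ i ≠ j, P i) ↔ ∃ i ≠ j, Q i := by
  have key : ∀ {P Q : ι → Prop}, (∀ i, i ≠ a → i ≠ b → P i → Q i) → (P a ∨ P b → Q a ∨ Q b) →
      (∃ i ≠ j, P i) → ∃ i ≠ j, Q i := by
    rintro P Q hPQ hab ⟨i, hij, hi⟩
    by_cases hia : i = a
    · subst hia; exact (hab (.inl hi)).elim (⟨i, hij, ·⟩) (⟨b, hb.symm, ·⟩)
    by_cases hib : i = b
    · subst hib; exact (hab (.inr hi)).elim (⟨a, ha.symm, ·⟩) (⟨i, hij, ·⟩)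
    exact ⟨i, hij, hPQ i hia hib hi⟩
  exact ⟨key (fun i hia hib => (hPQ i hia hib).1) hab.1,
    key (fun i hia hib => (hPQ i hia hib).2) hab.2⟩

lemma Fintype.prod_congr_off_pair {ι M : Type*} [Fintype ι] [DecidableEq ι] [CommMonoid M]
    {f g : ι → M} {a b : ι} (hab : a ≠ b) (hfg : ∀ i, i ≠ a → i ≠ b → f i = g i)
    (h : f a * f b = g a * g b) : ∏ i, f i = ∏ i, g i := by
  rw [← Finset.prod_mul_prod_compl {a, b} f, ← Finset.prod_mul_prod_compl {a, b} g,
    Finset.prod_pair hab, Finset.prod_pair hab, h]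
  congr 1
  exact Finset.prod_congr rfl fun i hi =>
    hfg i (by rintro rfl; simp at hi) (by rintro rfl; simp at hi)

namespace List

variable {α : Type*}

section EdgeWeight

variable {R : Type*} [CommMonoid R] (w : α → α → R)

def edgeWeight : List α → R
  | a :: b :: l => w a b * edgeWeight (b :: l)
  | _ => 1

@[simp] lemma edgeWeight_singleton (a : α) : edgeWeight w [a] = 1 := rfl

@[simp] lemma edgeWeight_cons_cons (a b : α) (l : List α) :
    edgeWeight w (a :: b :: l) = w a b * edgeWeight w (b :: l) := rfl

lemma edgeWeight_append_cons (xs : List α) (v : α) (ys : List α) :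
    edgeWeight w (xs ++ v :: ys) = edgeWeight w (xs ++ [v]) * edgeWeight w (v :: ys) := by
  induction xs with
  | nil => simp
  | cons a xs ih =>
    cases xs with
    | nil => simp
    | cons b xs => simp only [cons_append, edgeWeight_cons_cons] at ih ⊢; rw [ih, mul_assoc]

lemma edgeWeight_ofFn {m : ℕ} (f : Fin (m + 1) → α) :
    edgeWeight w (ofFn f) = ∏ k : Fin m, w (f k.castSucc) (f k.succ) := by
  induction m with
  | zero => simp
  | succ m ih =>
    have htail := ih fun i => f i.succ
    rw [ofFn_succ] at htail
    rw [ofFn_succ, ofFn_succ, edgeWeight_cons_cons, htail, Fin.prod_univ_succ]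
    rfl

end EdgeWeight

lemma IsChain.nodup {E : α → α → Prop} (hE : ∀ v, ¬ Relation.TransGen E v v) {l : List α}
    (hl : l.IsChain E) : l.Nodup :=
  (hl.imp fun _ _ => Relation.TransGen.single).pairwise.imp (S := (· ≠ ·))
    fun h heq => hE _ (heq ▸ h)

lemma not_mem_drop_of_getElem?_eq {l : List α} (hl : l.Nodup) {k i : ℕ} {x : α}
    (hx : l[k]? = some x) (hki : k < i) : x ∉ l.drop i := by
  rw [← take_append_drop i l, nodup_append] at hl
  exact fun hmem => hl.2.2 x (mem_of_getElem? (by rwa [getElem?_take_of_lt hki])) x hmem rfl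

def tailSwap (X Y : List α) (i t : ℕ) : List α := X.take i ++ Y.drop t

section TailSwap

variable {X Y : List α} {i t : ℕ}

lemma tailSwap_tailSwap (hi : i ≤ X.length) (ht : t ≤ Y.length) :
    tailSwap (tailSwap X Y i t) (tailSwap Y X t i) i t = X := by
  rw [tailSwap, tailSwap, tailSwap, take_left' (by simpa), drop_left' (by simpa),
    take_append_drop]

lemma mem_tailSwap_or_mem_tailSwap {x : α} :
    x ∈ tailSwap X Y i t ∨ x ∈ tailSwap Y X t i ↔ x ∈ X ∨ x ∈ Y := by
  have hX : x ∈ X ↔ x ∈ X.take i ∨ x ∈ X.drop i := by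
    rw [← mem_append, take_append_drop]
  have hY : x ∈ Y ↔ x ∈ Y.take t ∨ x ∈ Y.drop t := by
    rw [← mem_append, take_append_drop]
  simp only [tailSwap, mem_append, hX, hY]
  tauto

lemma getElem?_tailSwap_of_lt (hi : i ≤ X.length) {k : ℕ} (hk : k < i) :
    (tailSwap X Y i t)[k]? = X[k]? := by
  rw [tailSwap, getElem?_append_left (by simp; omega), getElem?_take_of_lt hk]

lemma getElem?_tailSwap_self (hi : i ≤ X.length) : (tailSwap X Y i t)[i]? = Y[t]? := by
  rw [tailSwap, getElem?_append_right (by simp), length_take_of_le hi, Nat.sub_self,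
    getElem?_drop, Nat.add_zero]

variable {v : α}

lemma head?_tailSwap (hXv : X[i]? = some v) (hYv : Y[t]? = some v) :
    (tailSwap X Y i t).head? = X.head? := by
  have hi : i < X.length := (getElem?_eq_some_iff.1 hXv).1
  rw [head?_eq_getElem?, head?_eq_getElem?]
  rcases Nat.eq_zero_or_pos i with rfl | hpos
  · rw [getElem?_tailSwap_self hi.le, hXv, hYv]
  · exact getElem?_tailSwap_of_lt hi.le hpos

lemma getLast?_tailSwap (hYv : Y[t]? = some v) : (tailSwap X Y i t).getLast? = Y.getLast? := by
  have ht : t < Y.length := (getElem?_eq_some_iff.1 hYv).1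
  rw [tailSwap, getLast?_append_of_ne_nil _ (by simp; omega), getLast?_drop, if_neg (by omega)]

lemma isChain_tailSwap (hXv : X[i]? = some v) (hYv : Y[t]? = some v) {E : α → α → Prop}
    (hX : X.IsChain E) (hY : Y.IsChain E) :
    (tailSwap X Y i t).IsChain E := by
  have hlink := hX.take (i + 1)
  rw [take_add_one, isChain_append, Option.head?_toList, hXv] at hlink
  rw [tailSwap, isChain_append, head?_drop, hYv]
  exact ⟨hX.take i, hY.drop t, hlink.2.2⟩

lemma edgeWeight_tailSwap_mul (hXv : X[i]? = some v) (hYv : Y[t]? = some v) {R : Type*}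
    [CommMonoid R] (w : α → α → R) :
    edgeWeight w (tailSwap X Y i t) * edgeWeight w (tailSwap Y X t i) =
      edgeWeight w X * edgeWeight w Y := by
  have hX := drop_eq_getElem_cons (getElem?_eq_some_iff.1 hXv).1
  have hY := drop_eq_getElem_cons (getElem?_eq_some_iff.1 hYv).1
  rw [(getElem_eq_iff _).2 hXv] at hX
  rw [(getElem_eq_iff _).2 hYv] at hY
  conv_rhs => rw [← take_append_drop i X, ← take_append_drop t Y]
  rw [tailSwap, tailSwap, hX, hY]
  simp only [edgeWeight_append_cons w _ v (drop _ _)]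
  ac_rfl

end TailSwap

end List

namespace DiPath

variable {V : Type*} [Fintype V] {E : V → V → Prop} {s t : V}

def toList (p : DiPath V E s t) : List V := List.ofFn p.1.2

lemma mem_toList {p : DiPath V E s t} {x : V} : x ∈ p.toList ↔ ∃ u, p.1.2 u = x :=
  List.mem_ofFn

lemma head?_toList (p : DiPath V E s t) : p.toList.head? = some s := by
  simp [toList, List.head?_eq_getElem?, ← p.2.1]

lemma getLast?_toList (p : DiPath V E s t) : p.toList.getLast? = some t := by
  rw [toList, List.getLast?_eq_getElem?, List.getElem?_ofFn, List.length_ofFn,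
    dif_pos (by omega)]
  exact congrArg some p.2.2.1

lemma isChain_toList (p : DiPath V E s t) : p.toList.IsChain E := by
  rw [toList, List.isChain_ofFn]
  exact fun i hi => p.2.2.2 ⟨i, by omega⟩

lemma toList_injective : Function.Injective (toList : DiPath V E s t → List V) := by
  rintro ⟨⟨⟨l, hl⟩, f⟩, hp⟩ ⟨⟨⟨l', hl'⟩, f'⟩, hp'⟩ h
  obtain rfl : l = l' := by simpa [toList] using congrArg List.length h
  obtain rfl : f = f' := List.ofFn_injective h
  rfl

lemma weight_eq_edgeWeight {R : Type*} [CommRing R] (w : V → V → R) (p : DiPath V E s t) :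
    p.weight w = p.toList.edgeWeight w :=
  (List.edgeWeight_ofFn w _).symm

def ofList (hE : ∀ v, ¬ Relation.TransGen E v v) (l : List V) (hs : l.head? = some s)
    (ht : l.getLast? = some t) (hl : l.IsChain E) : DiPath V E s t :=
  have hpos : 0 < l.length := by obtain ⟨_, rfl⟩ := List.head?_eq_some_iff.1 hs; simp
  ⟨⟨⟨l.length - 1, by have := (hl.nodup hE).length_le_card; omega⟩,
    fun i => l[i.1]'(by have := i.isLt; dsimp only at this; omega)⟩, by
    refine ⟨?_, ?_, fun k => ?_⟩
    · simpa [List.head?_eq_getElem?, List.getElem?_eq_getElem hpos] using hs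
    · simpa [List.getLast?_eq_getElem?, List.getElem?_eq_getElem (Nat.sub_lt hpos one_pos)]
        using ht
    · exact List.isChain_iff_getElem.1 hl k (by have := k.isLt; dsimp only at this; omega)⟩

lemma toList_ofList (hE : ∀ v, ¬ Relation.TransGen E v v) (l : List V) (hs : l.head? = some s)
    (ht : l.getLast? = some t) (hl : l.IsChain E) : (ofList hE l hs ht hl).toList = l := by
  have hpos : 0 < l.length := by obtain ⟨_, rfl⟩ := List.head?_eq_some_iff.1 hs; simp
  refine List.ext_getElem (by simp [toList, ofList]; omega) fun i _ _ => ?_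
  simp only [toList, ofList, List.getElem_ofFn]

end DiPath

abbrev PathSystem (V : Type*) [Fintype V] (E : V → V → Prop) {n : ℕ} (A B : Fin n → V) :=
  Σ σ : Equiv.Perm (Fin n), ∀ j, DiPath V E (A j) (B (σ j))

namespace PathSystem

open Finset

variable {V : Type*} [Fintype V] {E : V → V → Prop} {n : ℕ} {A B : Fin n → V}

def paths (q : PathSystem V E A B) (j : Fin n) : List V := (q.2 j).toList

lemma ext {q q' : PathSystem V E A B} (hσ : q.1 = q'.1) (hpaths : q.paths = q'.paths) :
    q = q' := by
  obtain ⟨σ, P⟩ := q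
  obtain ⟨σ', P'⟩ := q'
  obtain rfl : σ = σ' := hσ
  obtain rfl : P = P' := funext fun j => DiPath.toList_injective (congrFun hpaths j)
  rfl

lemma nodup_paths (hE : ∀ v, ¬ Relation.TransGen E v v) (q : PathSystem V E A B) (j : Fin n) :
    (q.paths j).Nodup :=
  (q.2 j).isChain_toList.nodup hE

def IsVertexDisjoint (q : PathSystem V E A B) : Prop :=
  ∀ j j' : Fin n, j ≠ j' → ∀ u v, (q.2 j).1.2 u ≠ (q.2 j').1.2 v

def IsCrossed (q : PathSystem V E A B) (j : Fin n) : Prop :=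
  ∃ x ∈ q.paths j, ∃ j' ≠ j, x ∈ q.paths j'

lemma not_isVertexDisjoint_iff {q : PathSystem V E A B} :
    ¬ q.IsVertexDisjoint ↔ ∃ j, q.IsCrossed j := by
  simp only [IsVertexDisjoint, IsCrossed, paths, DiPath.mem_toList]
  push Not
  constructor
  · rintro ⟨j, j', hne, u, v, huv⟩
    exact ⟨j, _, ⟨u, rfl⟩, j', hne.symm, v, huv.symm⟩
  · rintro ⟨j, _, ⟨u, rfl⟩, j', hne, v, huv⟩
    exact ⟨j, j', hne.symm, u, v, huv.symm⟩

def ofPaths (hE : ∀ v, ¬ Relation.TransGen E v v) (σ : Equiv.Perm (Fin n))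
    (L : Fin n → List V) (hs : ∀ j, (L j).head? = some (A j))
    (ht : ∀ j, (L j).getLast? = some (B (σ j))) (hL : ∀ j, (L j).IsChain E) :
    PathSystem V E A B :=
  ⟨σ, fun j => DiPath.ofList hE (L j) (hs j) (ht j) (hL j)⟩

lemma paths_ofPaths (hE : ∀ v, ¬ Relation.TransGen E v v) (σ : Equiv.Perm (Fin n))
    (L : Fin n → List V) (hs : ∀ j, (L j).head? = some (A j))
    (ht : ∀ j, (L j).getLast? = some (B (σ j))) (hL : ∀ j, (L j).IsChain E) :
    (ofPaths hE σ L hs ht hL).paths = L :=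
  funext fun j => DiPath.toList_ofList hE (L j) (hs j) (ht j) (hL j)

def signedWeight {R : Type*} [CommRing R] (w : V → V → R) (q : PathSystem V E A B) : R :=
  ((Equiv.Perm.sign q.1 : ℤ) : R) * ∏ j, (q.2 j).weight w

noncomputable section Switch

open scoped Classical

variable (q : PathSystem V E A B) (h : ¬ q.IsVertexDisjoint)

-- In the notation of the proof sketch: `j₀ = crossIdx`, `v = crossVertex`, `j₁ = partnerIdx`,
-- and `v` sits at position `crossPos` of `P j₀` and at position `partnerPos` of `P j₁`.
def crossIdx : Fin n :=
  (univ.filter q.IsCrossed).min' <| by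
    obtain ⟨j, hj⟩ := not_isVertexDisjoint_iff.1 h
    exact ⟨j, by simpa using hj⟩

lemma isCrossed_crossIdx : q.IsCrossed (crossIdx q h) :=
  (mem_filter.1 (min'_mem _ _)).2

lemma crossIdx_le {j : Fin n} (hj : q.IsCrossed j) : crossIdx q h ≤ j :=
  min'_le _ _ (by simpa using hj)

def IsCrossPos (i : ℕ) : Prop :=
  ∃ x ∈ (q.paths (crossIdx q h))[i]?, ∃ j' ≠ crossIdx q h, x ∈ q.paths j'

lemma exists_isCrossPos : ∃ i, IsCrossPos q h i := by
  obtain ⟨x, hx, hcross⟩ := isCrossed_crossIdx q h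
  obtain ⟨i, hi, rfl⟩ := List.mem_iff_getElem.1 hx
  exact ⟨i, _, List.getElem?_eq_getElem hi, hcross⟩

def crossPos : ℕ := Nat.find (exists_isCrossPos q h)

lemma not_isCrossPos_of_lt {i : ℕ} (hi : i < crossPos q h) : ¬ IsCrossPos q h i :=
  Nat.find_min _ hi

def crossVertex : V := (Nat.find_spec (exists_isCrossPos q h)).choose

lemma getElem?_crossPos : (q.paths (crossIdx q h))[crossPos q h]? = some (crossVertex q h) :=
  (Nat.find_spec (exists_isCrossPos q h)).choose_spec.1

lemma crossVertex_mem_crossIdx : crossVertex q h ∈ q.paths (crossIdx q h) :=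
  List.mem_of_getElem? (getElem?_crossPos q h)

lemma exists_ne_crossIdx_mem : ∃ j ≠ crossIdx q h, crossVertex q h ∈ q.paths j :=
  (Nat.find_spec (exists_isCrossPos q h)).choose_spec.2

def partnerIdx : Fin n :=
  (univ.filter fun j => j ≠ crossIdx q h ∧ crossVertex q h ∈ q.paths j).min' <| by
    obtain ⟨j, hj⟩ := exists_ne_crossIdx_mem q h
    exact ⟨j, by simpa using hj⟩

lemma partnerIdx_ne_crossIdx_and_mem :
    partnerIdx q h ≠ crossIdx q h ∧ crossVertex q h ∈ q.paths (partnerIdx q h) :=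
  (mem_filter.1 (min'_mem (univ.filter fun j => j ≠ crossIdx q h ∧ _) _)).2

lemma partnerIdx_ne_crossIdx : partnerIdx q h ≠ crossIdx q h :=
  (partnerIdx_ne_crossIdx_and_mem q h).1

lemma crossVertex_mem_partnerIdx : crossVertex q h ∈ q.paths (partnerIdx q h) :=
  (partnerIdx_ne_crossIdx_and_mem q h).2

lemma partnerIdx_le {j : Fin n} (hj : j ≠ crossIdx q h) (hv : crossVertex q h ∈ q.paths j) :
    partnerIdx q h ≤ j :=
  min'_le _ _ (by simpa using ⟨hj, hv⟩)

lemma exists_partnerPos : ∃ t : ℕ, (q.paths (partnerIdx q h))[t]? = some (crossVertex q h) := by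
  obtain ⟨t, ht, hv⟩ := List.mem_iff_getElem.1 (crossVertex_mem_partnerIdx q h)
  exact ⟨t, by rw [List.getElem?_eq_getElem ht, hv]⟩

def partnerPos : ℕ := Nat.find (exists_partnerPos q h)

lemma getElem?_partnerPos :
    (q.paths (partnerIdx q h))[partnerPos q h]? = some (crossVertex q h) :=
  Nat.find_spec (exists_partnerPos q h)

lemma getElem?_ne_of_lt_partnerPos {t : ℕ} (ht : t < partnerPos q h) :
    (q.paths (partnerIdx q h))[t]? ≠ some (crossVertex q h) :=
  Nat.find_min _ ht

def switchedPaths (j : Fin n) : List V :=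
  if j = crossIdx q h then
    (q.paths (crossIdx q h)).tailSwap (q.paths (partnerIdx q h)) (crossPos q h) (partnerPos q h)
  else if j = partnerIdx q h then
    (q.paths (partnerIdx q h)).tailSwap (q.paths (crossIdx q h)) (partnerPos q h) (crossPos q h)
  else q.paths j

lemma switchedPaths_crossIdx : switchedPaths q h (crossIdx q h) =
    (q.paths (crossIdx q h)).tailSwap (q.paths (partnerIdx q h)) (crossPos q h)
      (partnerPos q h) :=
  if_pos rfl

lemma switchedPaths_partnerIdx : switchedPaths q h (partnerIdx q h) =
    (q.paths (partnerIdx q h)).tailSwap (q.paths (crossIdx q h)) (partnerPos q h)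
      (crossPos q h) := by
  rw [switchedPaths, if_neg (partnerIdx_ne_crossIdx q h), if_pos rfl]

lemma switchedPaths_of_ne {j : Fin n} (h₀ : j ≠ crossIdx q h) (h₁ : j ≠ partnerIdx q h) :
    switchedPaths q h j = q.paths j := by
  rw [switchedPaths, if_neg h₀, if_neg h₁]

lemma head?_switchedPaths (j : Fin n) : (switchedPaths q h j).head? = some (A j) := by
  unfold switchedPaths
  split_ifs with h₀ h₁
  · subst h₀
    rw [List.head?_tailSwap (getElem?_crossPos q h) (getElem?_partnerPos q h)]
    exact (q.2 _).head?_toList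
  · subst h₁
    rw [List.head?_tailSwap (getElem?_partnerPos q h) (getElem?_crossPos q h)]
    exact (q.2 _).head?_toList
  · exact (q.2 j).head?_toList

lemma getLast?_switchedPaths (j : Fin n) : (switchedPaths q h j).getLast? =
    some (B ((q.1 * Equiv.swap (crossIdx q h) (partnerIdx q h)) j)) := by
  unfold switchedPaths
  split_ifs with h₀ h₁
  · subst h₀
    rw [List.getLast?_tailSwap (getElem?_partnerPos q h), Equiv.Perm.mul_apply,
      Equiv.swap_apply_left]
    exact (q.2 _).getLast?_toList
  · subst h₁
    rw [List.getLast?_tailSwap (getElem?_crossPos q h), Equiv.Perm.mul_apply,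
      Equiv.swap_apply_right]
    exact (q.2 _).getLast?_toList
  · rw [Equiv.Perm.mul_apply, Equiv.swap_apply_of_ne_of_ne h₀ h₁]
    exact (q.2 j).getLast?_toList

lemma isChain_switchedPaths (j : Fin n) : (switchedPaths q h j).IsChain E := by
  unfold switchedPaths
  split_ifs
  · exact List.isChain_tailSwap (getElem?_crossPos q h) (getElem?_partnerPos q h)
      (q.2 _).isChain_toList (q.2 _).isChain_toList
  · exact List.isChain_tailSwap (getElem?_partnerPos q h) (getElem?_crossPos q h)
      (q.2 _).isChain_toList (q.2 _).isChain_toList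
  · exact (q.2 j).isChain_toList

variable (hE : ∀ v, ¬ Relation.TransGen E v v)

def switch : PathSystem V E A B :=
  ofPaths hE (q.1 * Equiv.swap (crossIdx q h) (partnerIdx q h)) (switchedPaths q h)
    (head?_switchedPaths q h) (getLast?_switchedPaths q h) (isChain_switchedPaths q h)

lemma switch_fst : (switch q h hE).1 = q.1 * Equiv.swap (crossIdx q h) (partnerIdx q h) := rfl

lemma paths_switch : (switch q h hE).paths = switchedPaths q h := paths_ofPaths ..

lemma switch_ne : switch q h hE ≠ q := fun he => by
  have := congrArg Sigma.fst he
  rw [switch_fst, mul_eq_left, Equiv.swap_eq_one_iff] at this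
  exact partnerIdx_ne_crossIdx q h this.symm

lemma crossPos_lt_length : crossPos q h < (q.paths (crossIdx q h)).length :=
  (List.getElem?_eq_some_iff.1 (getElem?_crossPos q h)).1

lemma partnerPos_lt_length : partnerPos q h < (q.paths (partnerIdx q h)).length :=
  (List.getElem?_eq_some_iff.1 (getElem?_partnerPos q h)).1

lemma getElem?_switchedPaths_crossIdx :
    (switchedPaths q h (crossIdx q h))[crossPos q h]? = some (crossVertex q h) := by
  rw [switchedPaths_crossIdx, List.getElem?_tailSwap_self (crossPos_lt_length q h).le,
    getElem?_partnerPos]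

lemma getElem?_switchedPaths_partnerIdx :
    (switchedPaths q h (partnerIdx q h))[partnerPos q h]? = some (crossVertex q h) := by
  rw [switchedPaths_partnerIdx, List.getElem?_tailSwap_self (partnerPos_lt_length q h).le,
    getElem?_crossPos]

lemma crossVertex_mem_switchedPaths_iff {j : Fin n} :
    crossVertex q h ∈ switchedPaths q h j ↔ crossVertex q h ∈ q.paths j := by
  by_cases h₀ : j = crossIdx q h
  · subst h₀
    exact iff_of_true (List.mem_of_getElem? (getElem?_switchedPaths_crossIdx q h))
      (crossVertex_mem_crossIdx q h)
  by_cases h₁ : j = partnerIdx q h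
  · subst h₁
    exact iff_of_true (List.mem_of_getElem? (getElem?_switchedPaths_partnerIdx q h))
      (crossVertex_mem_partnerIdx q h)
  rw [switchedPaths_of_ne q h h₀ h₁]

lemma isCrossed_switch (j : Fin n) : (switch q h hE).IsCrossed j ↔ q.IsCrossed j := by
  have hv₀ := (crossVertex_mem_switchedPaths_iff q h).2 (crossVertex_mem_crossIdx q h)
  have hv₁ := (crossVertex_mem_switchedPaths_iff q h).2 (crossVertex_mem_partnerIdx q h)
  have hne := partnerIdx_ne_crossIdx q h
  simp only [IsCrossed, paths_switch]
  by_cases h₀ : j = crossIdx q h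
  · subst h₀
    exact iff_of_true ⟨_, hv₀, _, hne, hv₁⟩ (isCrossed_crossIdx q h)
  by_cases h₁ : j = partnerIdx q h
  · subst h₁
    exact iff_of_true ⟨_, hv₁, _, hne.symm, hv₀⟩
      ⟨_, crossVertex_mem_partnerIdx q h, _, hne.symm, crossVertex_mem_crossIdx q h⟩
  rw [switchedPaths_of_ne q h h₀ h₁]
  refine exists_congr fun x => and_congr_right fun _ => exists_ne_congr_off_pair
    (fun i hi₀ hi₁ => by rw [switchedPaths_of_ne q h hi₀ hi₁]) ?_ h₀ h₁
  rw [switchedPaths_crossIdx, switchedPaths_partnerIdx]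
  exact List.mem_tailSwap_or_mem_tailSwap

lemma not_isVertexDisjoint_switch : ¬ (switch q h hE).IsVertexDisjoint :=
  not_isVertexDisjoint_iff.2 ⟨_, (isCrossed_switch q h hE _).2 (isCrossed_crossIdx q h)⟩

variable (hf : ¬ (switch q h hE).IsVertexDisjoint)

lemma crossIdx_switch : crossIdx (switch q h hE) hf = crossIdx q h :=
  le_antisymm (crossIdx_le _ hf ((isCrossed_switch q h hE _).2 (isCrossed_crossIdx q h)))
    (crossIdx_le q h ((isCrossed_switch q h hE _).1 (isCrossed_crossIdx _ hf)))

lemma crossPos_switch : crossPos (switch q h hE) hf = crossPos q h := by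
  rw [crossPos, Nat.find_eq_iff]
  simp only [IsCrossPos, crossIdx_switch q h hE hf, paths_switch]
  refine ⟨⟨_, getElem?_switchedPaths_crossIdx q h, _, partnerIdx_ne_crossIdx q h,
    List.mem_of_getElem? (getElem?_switchedPaths_partnerIdx q h)⟩, fun i hi => ?_⟩
  rintro ⟨x, hx, j', hj', hxj'⟩
  rw [switchedPaths_crossIdx, List.getElem?_tailSwap_of_lt (crossPos_lt_length q h).le hi] at hx
  by_cases h₁ : j' = partnerIdx q h
  · subst h₁
    rw [switchedPaths_partnerIdx, List.tailSwap, List.mem_append] at hxj'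
    rcases hxj' with hxj' | hxj'
    · exact not_isCrossPos_of_lt q h hi ⟨x, hx, _, hj', List.mem_of_mem_take hxj'⟩
    -- Without acyclicity, `x` could reappear in the tail of `P j₀` that now ends `P j₁`.
    · exact List.not_mem_drop_of_getElem?_eq (nodup_paths hE q _) hx hi hxj'
  · rw [switchedPaths_of_ne q h hj' h₁] at hxj'
    exact not_isCrossPos_of_lt q h hi ⟨x, hx, j', hj', hxj'⟩

lemma crossVertex_switch : crossVertex (switch q h hE) hf = crossVertex q h := by
  have hv := getElem?_crossPos (switch q h hE) hf
  rw [crossIdx_switch q h hE hf, crossPos_switch q h hE hf, paths_switch,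
    getElem?_switchedPaths_crossIdx] at hv
  exact Option.some_injective _ hv.symm

lemma partnerIdx_switch : partnerIdx (switch q h hE) hf = partnerIdx q h := by
  have hne := partnerIdx_ne_crossIdx (switch q h hE) hf
  have hv := crossVertex_mem_partnerIdx (switch q h hE) hf
  rw [crossIdx_switch q h hE hf] at hne
  rw [crossVertex_switch q h hE hf, paths_switch, crossVertex_mem_switchedPaths_iff] at hv
  refine le_antisymm (partnerIdx_le _ hf ?_ ?_) (partnerIdx_le q h hne hv)
  · rw [crossIdx_switch q h hE hf]
    exact partnerIdx_ne_crossIdx q h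
  · rw [crossVertex_switch q h hE hf, paths_switch, crossVertex_mem_switchedPaths_iff]
    exact crossVertex_mem_partnerIdx q h

lemma partnerPos_switch : partnerPos (switch q h hE) hf = partnerPos q h := by
  rw [partnerPos, Nat.find_eq_iff]
  simp only [partnerIdx_switch q h hE hf, crossVertex_switch q h hE hf, paths_switch]
  refine ⟨getElem?_switchedPaths_partnerIdx q h, fun t ht => ?_⟩
  rw [switchedPaths_partnerIdx, List.getElem?_tailSwap_of_lt (partnerPos_lt_length q h).le ht]
  exact getElem?_ne_of_lt_partnerPos q h ht

lemma switch_switch : switch (switch q h hE) hf hE = q := by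
  refine ext ?_ (funext fun j => ?_)
  · rw [switch_fst, switch_fst, crossIdx_switch q h hE hf, partnerIdx_switch q h hE hf,
      mul_assoc, Equiv.swap_mul_self, mul_one]
  rw [paths_switch, switchedPaths, crossIdx_switch q h hE hf, partnerIdx_switch q h hE hf,
    crossPos_switch q h hE hf, partnerPos_switch q h hE hf, paths_switch,
    switchedPaths_crossIdx, switchedPaths_partnerIdx]
  split_ifs with h₀ h₁
  · subst h₀
    exact List.tailSwap_tailSwap (crossPos_lt_length q h).le (partnerPos_lt_length q h).le
  · subst h₁
    exact List.tailSwap_tailSwap (partnerPos_lt_length q h).le (crossPos_lt_length q h).le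
  · exact switchedPaths_of_ne q h h₀ h₁

lemma signedWeight_switch {R : Type*} [CommRing R] (w : V → V → R) :
    (switch q h hE).signedWeight w = - q.signedWeight w := by
  have hprod : ∏ j, ((switch q h hE).2 j).weight w = ∏ j, (q.2 j).weight w := by
    simp only [DiPath.weight_eq_edgeWeight]
    change ∏ j, ((switch q h hE).paths j).edgeWeight w = ∏ j, (q.paths j).edgeWeight w
    rw [paths_switch]
    refine Fintype.prod_congr_off_pair (partnerIdx_ne_crossIdx q h).symm
      (fun j h₀ h₁ => by rw [switchedPaths_of_ne q h h₀ h₁]) ?_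
    rw [switchedPaths_crossIdx, switchedPaths_partnerIdx]
    exact List.edgeWeight_tailSwap_mul (getElem?_crossPos q h) (getElem?_partnerPos q h) w
  rw [signedWeight, signedWeight, hprod, switch_fst, map_mul,
    Equiv.Perm.sign_swap (partnerIdx_ne_crossIdx q h).symm]
  push_cast
  ring

end Switch

section Expansion

variable [DecidableEq V] [DecidableRel E] {R : Type*} [CommRing R] (w : V → V → R)

lemma det_pathMatrix_eq_sum_signedWeight (A B : Fin n → V) :
    (Matrix.of fun j k : Fin n => ∑ p : DiPath V E (A j) (B k), p.weight w).det =
      ∑ q : PathSystem V E A B, q.signedWeight w := by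
  rw [← Matrix.det_transpose, Matrix.det_apply', Fintype.sum_sigma]
  refine sum_congr rfl fun σ _ => ?_
  simp only [Matrix.transpose_apply, Matrix.of_apply, Fintype.prod_sum, mul_sum, signedWeight]

open scoped Classical in
lemma sum_signedWeight_not_isVertexDisjoint (hE : ∀ v, ¬ Relation.TransGen E v v) :
    ∑ q ∈ univ.filter (fun q : PathSystem V E A B => ¬ q.IsVertexDisjoint), q.signedWeight w =
      0 :=
  sum_involution (fun q hq => switch q (mem_filter.1 hq).2 hE)
    (fun q _ => by rw [signedWeight_switch, add_neg_cancel])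
    (fun q _ _ => switch_ne q _ hE)
    (fun q _ => mem_filter.2 ⟨mem_univ _, not_isVertexDisjoint_switch q _ hE⟩)
    (fun q _ => switch_switch q _ hE _)

end Expansion

end PathSystem

open Finset in
/-- **Gessel–Viennot–Lindström Lemma.**  In a finite acyclic weighted digraph
with initial vertices `A 0, …, A (n-1)` and final vertices `B 0, …, B (n-1)`,
the determinant of the path matrix `M` — where `M j k` is the sum of the
weights of all directed paths from `A j` to `B k` — equals the sum over all
vertex-disjoint path systems `P` of `sgn(P) * w(P)`. -/
theorem gessel_viennot_lindstrom {V : Type*} [Fintype V] [DecidableEq V]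
    (E : V → V → Prop) [DecidableRel E]
    (hacyclic : ∀ v : V, ¬ Relation.TransGen E v v)
    {R : Type*} [CommRing R] (w : V → V → R) {n : ℕ} (A B : Fin n → V) :
    (Matrix.of fun j k : Fin n =>
        ∑ p : DiPath V E (A j) (B k), p.weight w).det =
      ∑ q : VDPathSystem V E A B,
        ((Equiv.Perm.sign q.1.1 : ℤ) : R) * ∏ j, (q.1.2 j).weight w := by
  classical
  rw [PathSystem.det_pathMatrix_eq_sum_signedWeight,
    ← sum_filter_add_sum_filter_not univ PathSystem.IsVertexDisjoint,
    PathSystem.sum_signedWeight_not_isVertexDisjoint w hacyclic, add_zero]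
  exact sum_subtype _ (fun q => mem_filter.trans (and_iff_right (mem_univ q))) _
end
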